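/- arXiv:2312.00017 — 5 statements merged into one kernel-verified Lean document; each statement's English description precedes it below -/
import Mathlib

section
/- Let n ∈ ℕ, A = (a_{ij}) ∈ Mₙ(ℝ) and α̂ = (α₁,…,αₙ) ∈ (0,1]ⁿ. Then the α̂-order spectrum satisfies the Geršgorin-type inclusion σ_{α̂}(A) ⊆ ⋃_{i=1}^{n} { z ∈ ℂ : |a_{ii} − z^{α_i}| ≤ r_i(A) }, where r_i(A) = Σ_{j≠i} |a_{ij}|. -/
/-- The matrix `diag(z^{α₁},…,z^{αₙ}) - M`, with complex powers in the principal branch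
(`Complex.cpow`, whose argument lies in `(-π, π]`). -/
noncomputable def fracMat {n : ℕ} (α : Fin n → ℝ) (M : Matrix (Fin n) (Fin n) ℂ) (z : ℂ) :
    Matrix (Fin n) (Fin n) ℂ :=
  Matrix.diagonal (fun i => z ^ (α i : ℂ)) - M

/-- The `α`-order spectrum of a (complex) matrix `M`. -/
noncomputable def fracSpec {n : ℕ} (α : Fin n → ℝ) (M : Matrix (Fin n) (Fin n) ℂ) : Set ℂ :=
  {z : ℂ | (fracMat α M z).det = 0}

/-! A point `z` of the `α`-order spectrum makes `diag(z^{α_i}) - A` singular, and by the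
classical Geršgorin argument a singular matrix is not strictly row diagonally dominant. Hence
some row `i` satisfies `|z^{α_i} - a_{ii}| ≤ Σ_{j≠i} |a_{ij}|`. -/

theorem Matrix.exists_norm_diag_le_of_det_eq_zero {K ι : Type*} [NormedField K] [Fintype ι]
    [DecidableEq ι] {A : Matrix ι ι K} (h : A.det = 0) :
    ∃ k, ‖A k k‖ ≤ ∑ j ∈ Finset.univ.erase k, ‖A k j‖ := by
  by_contra! hdom
  exact det_ne_zero_of_sum_row_lt_diag hdom h

section fracMat

variable {n : ℕ} (α : Fin n → ℝ) (M : Matrix (Fin n) (Fin n) ℂ) (z : ℂ)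

theorem fracMat_apply_self (i : Fin n) : fracMat α M z i i = z ^ (α i : ℂ) - M i i := by
  simp only [fracMat, Matrix.sub_apply, Matrix.diagonal_apply_eq]

theorem fracMat_apply_of_ne {i j : Fin n} (h : i ≠ j) : fracMat α M z i j = -M i j := by
  rw [fracMat, Matrix.sub_apply, Matrix.diagonal_apply_ne _ h, zero_sub]

theorem fracSpec_subset_iUnion_norm_le :
    fracSpec α M ⊆ ⋃ i : Fin n,
      {z : ℂ | ‖M i i - z ^ (α i : ℂ)‖ ≤ ∑ j ∈ Finset.univ.erase i, ‖M i j‖} := by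
  intro z hz
  obtain ⟨i, hi⟩ := Matrix.exists_norm_diag_le_of_det_eq_zero (A := fracMat α M z) hz
  refine Set.mem_iUnion.2 ⟨i, ?_⟩
  calc ‖M i i - z ^ (α i : ℂ)‖ = ‖fracMat α M z i i‖ := by
        rw [fracMat_apply_self, norm_sub_rev]
    _ ≤ ∑ j ∈ Finset.univ.erase i, ‖fracMat α M z i j‖ := hi
    _ = ∑ j ∈ Finset.univ.erase i, ‖M i j‖ := Finset.sum_congr rfl fun j hj => by
        rw [fracMat_apply_of_ne α M z (Finset.ne_of_mem_erase hj).symm, norm_neg]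

end fracMat

theorem fracSpec_subset_gershgorin_general
    {n : ℕ} (A : Matrix (Fin n) (Fin n) ℝ) (α : Fin n → ℝ) :
    fracSpec α (A.map (fun a => (a : ℂ))) ⊆
      ⋃ i : Fin n, {z : ℂ |
        ‖(A i i : ℂ) - z ^ (α i : ℂ)‖ ≤ ∑ j ∈ Finset.univ.erase i, |A i j|} := by
  simpa only [Matrix.map_apply, Complex.norm_real, Real.norm_eq_abs] using
    fracSpec_subset_iUnion_norm_le α (A.map (fun a => (a : ℂ)))

/-- Geršgorin-type inclusion for the `α̂`-order spectrum: the `α̂`-order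
spectrum of a real matrix `A` is contained in the union of the sets
`{z : |a_{ii} − z^{α_i}| ≤ r_i(A)}`, where `r_i(A) = Σ_{j≠i} |a_{ij}|`. -/
theorem fracSpec_subset_gershgorin
    {n : ℕ} (A : Matrix (Fin n) (Fin n) ℝ) (α : Fin n → ℝ)
    (hα : ∀ i, α i ∈ Set.Ioc (0 : ℝ) 1) :
    fracSpec α (A.map (fun a => (a : ℂ))) ⊆
      ⋃ i : Fin n, {z : ℂ |
        ‖(A i i : ℂ) - z ^ (α i : ℂ)‖ ≤ ∑ j ∈ Finset.univ.erase i, |A i j|} :=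
  fracSpec_subset_gershgorin_general A α
end

section
/- Let n ∈ ℕ and let A = (a_{ij}) ∈ Mₙ(ℝ) be a (strictly) diagonally dominant matrix with negative diagonal entries, i.e., a_{ii} < 0 and |a_{ii}| > r_i(A) = Σ_{j≠i}|a_{ij}| for all i = 1,…,n. Then for every multi-index α̂ ∈ (0,1]ⁿ, the α̂-order spectrum of A lies in the open left half-plane: σ_{α̂}(A) ⊆ ℂ₋ = { z ∈ ℂ : Re z < 0 }. -/
/-!
For `Re z ≥ 0` we have `|arg z| ≤ π/2`, so every principal power `z ^ a` with `|a| ≤ 1` again has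
nonnegative real part. Then each diagonal entry `z ^ αᵢ - aᵢᵢ` of `diag(z^α̂) - A` has modulus at
least `-aᵢᵢ = |aᵢᵢ|`, while the off-diagonal entries are unchanged, so the matrix stays strictly
diagonally dominant and is invertible by the Lévy–Desplanques theorem.
-/

open Matrix

theorem Complex.re_cpow_ofReal_nonneg {z : ℂ} (hz : 0 ≤ z.re) {a : ℝ} (ha : |a| ≤ 1) :
    0 ≤ (z ^ (a : ℂ)).re := by
  have harg : |z.arg * a| ≤ Real.pi / 2 := by
    rw [abs_mul]
    calc |z.arg| * |a| ≤ Real.pi / 2 * 1 :=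
          mul_le_mul (Complex.abs_arg_le_pi_div_two_iff.mpr hz) ha (abs_nonneg a) (by positivity)
      _ = Real.pi / 2 := mul_one _
  rw [Complex.cpow_ofReal_re]
  exact mul_nonneg (Real.rpow_nonneg (norm_nonneg z) a)
    (Real.cos_nonneg_of_neg_pi_div_two_le_of_le (abs_le.mp harg).1 (abs_le.mp harg).2)

theorem Matrix.det_diagonal_sub_map_ofReal_ne_zero {ι : Type*} [Fintype ι] [DecidableEq ι]
    (A : Matrix ι ι ℝ) (hdiag : ∀ i, A i i < 0)
    (hdom : ∀ i, ∑ j ∈ Finset.univ.erase i, |A i j| < |A i i|)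
    (w : ι → ℂ) (hw : ∀ i, 0 ≤ (w i).re) :
    (diagonal w - A.map (fun a => (a : ℂ))).det ≠ 0 := by
  refine det_ne_zero_of_sum_row_lt_diag fun k => ?_
  have hoff : ∀ j ∈ Finset.univ.erase k,
      ‖(diagonal w - A.map (fun a => (a : ℂ))) k j‖ = |A k j| := by
    intro j hj
    simp [diagonal_apply_ne _ (Finset.ne_of_mem_erase hj).symm, Complex.norm_real]
  rw [Finset.sum_congr rfl hoff]
  calc ∑ j ∈ Finset.univ.erase k, |A k j| < |A k k| := hdom k
    _ ≤ (w k).re - A k k := by linarith [abs_of_neg (hdiag k), hw k]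
    _ = (w k - A k k).re := by simp
    _ ≤ ‖(diagonal w - A.map (fun a => (a : ℂ))) k k‖ := by
      simpa using Complex.re_le_norm (w k - A k k)

/-- if `A` is strictly diagonally dominant with negative diagonal entries,
then for every multi-index `α̂ ∈ (0,1]ⁿ` the `α̂`-order spectrum of `A` lies in the open left
half-plane. -/
theorem fracSpec_subset_left_halfplane_of_diagonally_dominant
    {n : ℕ} (A : Matrix (Fin n) (Fin n) ℝ)
    (hdiag : ∀ i, A i i < 0)
    (hdom : ∀ i, (∑ j ∈ Finset.univ.erase i, |A i j|) < |A i i|)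
    (α : Fin n → ℝ) (hα : ∀ i, α i ∈ Set.Ioc (0 : ℝ) 1) :
    fracSpec α (A.map (fun a => (a : ℂ))) ⊆ {z : ℂ | z.re < 0} := by
  intro z hz
  by_contra hre
  have hα_abs : ∀ i, |α i| ≤ 1 := fun i => abs_le.mpr ⟨by linarith [(hα i).1], (hα i).2⟩
  exact det_diagonal_sub_map_ofReal_ne_zero A hdiag hdom _
    (fun i => Complex.re_cpow_ofReal_nonneg (not_lt.mp hre) (hα_abs i)) hz
end

section
/- Let n ∈ ℕ, A ∈ Mₙ(ℝ) and α̂ = (α₁,…,αₙ) ∈ ((0,1] ∩ ℚ)ⁿ with α_i = q_i/m_i in lowest terms (q_i, m_i ∈ ℕ). Let m be the least common multiple of m₁,…,mₙ, set p_i = q_i·(m/m_i) ∈ ℕ, γ = 1/m, and let P(s) = det(diag(s^{p₁},…,s^{pₙ}) − A) = Σ_{k=0}^{p₁+…+pₙ} b_k s^k, where b_k are the coefficients given by b_{p₁+…+pₙ} = 1, b₀ = (−1)ⁿ det A, b_k = Σ (−1)^{n−r} det A_{(i₁,…,i_r)} over all 1 ≤ i₁ < … < i_r ≤ n with p_{i₁}+…+p_{i_r}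 = k, and b_k = 0 if k is not such a partial sum. Let B be the companion matrix of the monic polynomial P (so det(sI − B) = P(s)). Then σ_{α̂}(A) ⊆ ℂ₋ if and only if every eigenvalue s of B with −γπ < arg s ≤ γπ satisfies s ≠ 0 and |arg s| > γπ/2, i.e., σ̃^γ(B) := { s ∈ ℂ : −γπ < arg s ≤ γπ and det(sI − B) = 0 } is contained in Ω_γ := { z ∈ ℂ \ {0} : |arg z| > γπ/2 and −γπ < arg z ≤ γπ }. -/
/-!
Substituting `s = z ^ (1/m)` (principal branch) turns `z ^ αᵢ` into `s ^ pᵢ`, so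
`det (diag (z ^ α̂) - A) = P (z ^ (1/m))`, and expanding the determinant along the diagonal
identifies `P` with `det (s • 1 - B)`. The map `z ↦ z ^ (1/m)` is a bijection of `ℂ` onto the
sector `-π/m < arg s ≤ π/m` (with inverse `s ↦ s ^ m`) that divides arguments by `m`, so
`Re z < 0`, i.e. `|arg z| > π/2`, becomes `|arg s| > π/(2m)`.
-/

section

open Finset

theorem Finset.sum_range_sum_filter_mul_pow {ι R : Type*} [CommSemiring R] (s : Finset ι)
    (g : ι → ℕ) (c : ι → R) (x : R) {D : ℕ} (hg : ∀ i ∈ s, g i ≤ D) :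
    ∑ k ∈ range (D + 1), (∑ i ∈ s with g i = k, c i) * x ^ k = ∑ i ∈ s, c i * x ^ g i := by
  rw [← sum_fiberwise_of_maps_to (g := g) (t := range (D + 1))
    (fun i hi => mem_range_succ_iff.2 (hg i hi))]
  refine sum_congr rfl fun k _ => ?_
  rw [sum_mul]
  exact sum_congr rfl fun i hi => by rw [(mem_filter.1 hi).2]

namespace Matrix

variable {n R : Type*} [Fintype n] [DecidableEq n] [CommRing R]

theorem det_diagonal_add (d : n → R) (M : Matrix n n R) :
    det (diagonal d + M) =
      ∑ S : Finset n, (∏ i ∈ S, d i) * det (M.submatrix ((↑) : ↥Sᶜ → n) (↑)) := by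
  have hrows : diagonal d + M = of ((fun i => d i • (1 : Matrix n n R).row i) + M.row) := by
    ext i j
    by_cases h : i = j <;> simp [h]
  rw [hrows]
  change detRowAlternating ((fun i => d i • (1 : Matrix n n R).row i) + M.row) = _
  rw [AlternatingMap.map_add_univ]
  refine sum_congr rfl fun S _ => ?_
  have hsmul : S.piecewise (fun i => d i • (1 : Matrix n n R).row i) M.row =
      fun i => (if i ∈ S then d i else 1) • S.piecewise (1 : Matrix n n R).row M.row i := by
    funext i
    by_cases h : i ∈ S <;> simp [h]
  rw [hsmul, AlternatingMap.map_smul_univ, prod_ite_mem, univ_inter, smul_eq_mul,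
    ← piecewise_compl, ← det_piecewise_one_eq_submatrix_det]
  rfl

theorem det_diagonal_sub (d : n → R) (M : Matrix n n R) :
    det (diagonal d - M) =
      ∑ S : Finset n, (-1) ^ (Fintype.card n - #S) *
        det (M.submatrix ((↑) : ↥Sᶜ → n) (↑)) * ∏ i ∈ S, d i := by
  rw [sub_eq_add_neg, det_diagonal_add]
  refine sum_congr rfl fun S _ => ?_
  rw [submatrix_neg, Pi.neg_apply, Pi.neg_apply, det_neg, Fintype.card_coe, card_compl]
  ring

theorem det_diagonal_pow_sub (M : Matrix n n R) (p : n → ℕ) (x : R) {D : ℕ} (hD : ∑ i, p i ≤ D) :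
    det (diagonal (fun i => x ^ p i) - M) =
      ∑ k ∈ range (D + 1), (∑ S : Finset n with ∑ i ∈ S, p i = k,
        (-1) ^ (Fintype.card n - #S) * det (M.submatrix ((↑) : ↥Sᶜ → n) (↑))) * x ^ k := by
  rw [sum_range_sum_filter_mul_pow _ _ _ _
    fun S _ => (sum_le_sum_of_subset (subset_univ S)).trans hD, det_diagonal_sub]
  simp_rw [prod_pow_eq_pow_sum]

end Matrix

end

namespace Complex

open Real

theorem arg_cpow_inv_natCast (x : ℂ) {N : ℕ} (hN : N ≠ 0) :
    arg (x ^ (N⁻¹ : ℂ)) = arg x / N := by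
  rcases eq_or_ne x 0 with rfl | hx
  · simp [hN]
  have hN1 : (1 : ℝ) ≤ N := Nat.one_le_cast.2 (Nat.one_le_iff_ne_zero.2 hN)
  have him : (log x * (N⁻¹ : ℂ)).im = arg x / N := by
    rw [← ofReal_natCast, ← ofReal_inv, im_mul_ofReal, log_im, div_eq_mul_inv]
  have hlo : -π < arg x / N := by
    rw [lt_div_iff₀ (by positivity)]
    nlinarith [neg_pi_lt_arg x, arg_le_pi x, pi_pos]
  have hhi : arg x / N ≤ π := by
    rw [div_le_iff₀ (by positivity)]
    nlinarith [neg_pi_lt_arg x, arg_le_pi x, pi_pos]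
  rw [cpow_def_of_ne_zero hx, ← log_im, log_exp (him ▸ hlo) (him ▸ hhi), him]

theorem range_cpow_inv_natCast {N : ℕ} (hN : N ≠ 0) :
    Set.range (fun x : ℂ => x ^ (N⁻¹ : ℂ)) = {s | -(π / N) < arg s ∧ arg s ≤ π / N} := by
  have hNpos : (0 : ℝ) < N := by positivity
  ext s
  constructor
  · rintro ⟨x, rfl⟩
    rw [Set.mem_ofPred_eq, arg_cpow_inv_natCast x hN, ← neg_div,
      div_lt_div_iff_of_pos_right hNpos, div_le_div_iff_of_pos_right hNpos]
    exact ⟨neg_pi_lt_arg x, arg_le_pi x⟩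
  · rintro ⟨hlo, hhi⟩
    exact ⟨s ^ N, pow_cpow_nat_inv hN hlo hhi⟩

theorem re_neg_iff_pi_div_two_lt_abs_arg {z : ℂ} : z.re < 0 ↔ π / 2 < |arg z| := by
  rw [← not_le, ← not_le, abs_arg_le_pi_div_two_iff]

theorem re_neg_iff_abs_arg_cpow_inv_natCast (z : ℂ) {N : ℕ} (hN : N ≠ 0) :
    z.re < 0 ↔ z ^ (N⁻¹ : ℂ) ≠ 0 ∧ π / 2 / N < |arg (z ^ (N⁻¹ : ℂ))| := by
  rw [re_neg_iff_pi_div_two_lt_abs_arg, arg_cpow_inv_natCast z hN, abs_div, Nat.abs_cast,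
    div_lt_div_iff_of_pos_right (by positivity)]
  refine (and_iff_right_of_imp fun h hz => ?_).symm
  obtain ⟨rfl, -⟩ := (cpow_eq_zero_iff _ _).1 hz
  rw [arg_zero, abs_zero] at h
  linarith [pi_pos]

theorem setOf_re_neg_eq_preimage_cpow_inv_natCast {N : ℕ} (hN : N ≠ 0) :
    {z : ℂ | z.re < 0} = (fun x : ℂ => x ^ (N⁻¹ : ℂ)) ⁻¹'
      {s | s ≠ 0 ∧ π / 2 / N < |arg s| ∧ -(π / N) < arg s ∧ arg s ≤ π / N} := by
  ext z
  have hsector : z ^ (N⁻¹ : ℂ) ∈ {s : ℂ | -(π / N) < arg s ∧ arg s ≤ π / N} :=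
    range_cpow_inv_natCast hN ▸ Set.mem_range_self z
  rw [Set.mem_preimage, Set.mem_ofPred_eq, Set.mem_ofPred_eq,
    re_neg_iff_abs_arg_cpow_inv_natCast z hN]
  exact ⟨fun h => ⟨h.1, h.2, hsector⟩, fun h => ⟨h.1, h.2.1⟩⟩

end Complex

open Complex in
theorem fracSpec_subset_left_halfplane_iff_companion_roots_general
    {n : ℕ} (A : Matrix (Fin n) (Fin n) ℝ) (α : Fin n → ℝ)
    (q m : Fin n → ℕ) (hm : ∀ i, 0 < m i)
    (hαq : ∀ i, α i = (q i : ℝ) / (m i : ℝ))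
    (m₀ : ℕ) (hm₀ : m₀ = (Finset.univ : Finset (Fin n)).lcm m)
    (p : Fin n → ℕ) (hp : ∀ i, p i = q i * (m₀ / m i))
    (γ : ℝ) (hγ : γ = 1 / (m₀ : ℝ))
    (b : ℕ → ℂ)
    (hb : ∀ k, b k =
      ∑ S ∈ Finset.univ.filter (fun S : Finset (Fin n) => ∑ i ∈ S, p i = k),
        (-1 : ℂ) ^ (n - S.card) *
          Matrix.det ((A.map (fun a => (a : ℂ))).submatrix
            (fun i : ↥(Sᶜ) => (i : Fin n)) (fun j : ↥(Sᶜ) => (j : Fin n))))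
    (D : ℕ) (hD : D = ∑ i, p i)
    (B : Matrix (Fin D) (Fin D) ℂ)
    (hB : ∀ s : ℂ, (s • (1 : Matrix (Fin D) (Fin D) ℂ) - B).det =
      ∑ k ∈ Finset.range (D + 1), b k * s ^ k) :
    fracSpec α (A.map (fun a => (a : ℂ))) ⊆ {z : ℂ | z.re < 0} ↔
      {s : ℂ | (-(γ * Real.pi) < s.arg ∧ s.arg ≤ γ * Real.pi) ∧
          (s • (1 : Matrix (Fin D) (Fin D) ℂ) - B).det = 0} ⊆
        {z : ℂ | z ≠ 0 ∧ γ * (Real.pi / 2) < |z.arg| ∧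
          -(γ * Real.pi) < z.arg ∧ z.arg ≤ γ * Real.pi} := by
  have hm_dvd (i : Fin n) : m i ∣ m₀ := hm₀ ▸ Finset.dvd_lcm (Finset.mem_univ i)
  have hm₀_ne : m₀ ≠ 0 := hm₀ ▸ Finset.lcm_ne_zero_iff.2 fun i _ => (hm i).ne'
  have hα_eq (i : Fin n) : (α i : ℂ) = p i * (m₀ : ℂ)⁻¹ := by
    have hmi : (m i : ℂ) ≠ 0 := Nat.cast_ne_zero.2 (hm i).ne'
    rw [hαq i, hp i]
    push_cast [Nat.cast_div (hm_dvd i) hmi]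
    field_simp
  have hcompanion (s : ℂ) : (s • (1 : Matrix (Fin D) (Fin D) ℂ) - B).det =
      (Matrix.diagonal (fun i => s ^ p i) - A.map (fun a => (a : ℂ))).det := by
    rw [hB, Matrix.det_diagonal_pow_sub _ _ s hD.ge]
    simp only [hb, Fintype.card_fin]
  have hγπ : γ * Real.pi = Real.pi / m₀ := by rw [hγ]; ring
  have hγπ2 : γ * (Real.pi / 2) = Real.pi / 2 / m₀ := by rw [hγ]; ring
  have hspec : fracSpec α (A.map (fun a => (a : ℂ))) = (fun z : ℂ => z ^ ((m₀ : ℂ)⁻¹)) ⁻¹'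
      {s | (s • (1 : Matrix (Fin D) (Fin D) ℂ) - B).det = 0} := by
    ext z
    simp only [fracSpec, fracMat, Set.mem_preimage, Set.mem_ofPred_eq, hα_eq, cpow_nat_mul,
      hcompanion]
  rw [hγπ, hγπ2, hspec, setOf_re_neg_eq_preimage_cpow_inv_natCast hm₀_ne,
    ← Set.preimage_inter_range, Set.preimage_subset_preimage_iff Set.inter_subset_right,
    range_cpow_inv_natCast hm₀_ne, Set.inter_comm]
  rfl

/-- Theorem 3.1: for rational orders `α_i = q_i/m_i` in lowest terms, with
`m = lcm(m₁,…,mₙ)`, `p_i = q_i·(m/m_i)`, `γ = 1/m`, coefficients `b_k` given by signed sums of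
principal minors of `A` over subsets `S` with `Σ_{i∈S} p_i = k`, and `B` a companion-type matrix
with `det(sI − B) = Σ_k b_k s^k`, the `α̂`-order spectrum of `A` lies in the open left
half-plane iff every root `s` of `det(sI − B)` with `−γπ < arg s ≤ γπ` lies in
`Ω_γ = {z ≠ 0 : |arg z| > γπ/2, −γπ < arg z ≤ γπ}`. -/
theorem fracSpec_subset_left_halfplane_iff_companion_roots
    {n : ℕ} (A : Matrix (Fin n) (Fin n) ℝ) (α : Fin n → ℝ)
    (hα : ∀ i, α i ∈ Set.Ioc (0 : ℝ) 1)
    (q m : Fin n → ℕ) (hm : ∀ i, 0 < m i) (hcop : ∀ i, Nat.Coprime (q i) (m i))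
    (hαq : ∀ i, α i = (q i : ℝ) / (m i : ℝ))
    (m₀ : ℕ) (hm₀ : m₀ = (Finset.univ : Finset (Fin n)).lcm m)
    (p : Fin n → ℕ) (hp : ∀ i, p i = q i * (m₀ / m i))
    (γ : ℝ) (hγ : γ = 1 / (m₀ : ℝ))
    (b : ℕ → ℂ)
    (hb : ∀ k, b k =
      ∑ S ∈ Finset.univ.filter (fun S : Finset (Fin n) => ∑ i ∈ S, p i = k),
        (-1 : ℂ) ^ (n - S.card) *
          Matrix.det ((A.map (fun a => (a : ℂ))).submatrix
            (fun i : ↥(Sᶜ) => (i : Fin n)) (fun j : ↥(Sᶜ) => (j : Fin n))))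
    (D : ℕ) (hD : D = ∑ i, p i)
    (B : Matrix (Fin D) (Fin D) ℂ)
    (hB : ∀ s : ℂ, (s • (1 : Matrix (Fin D) (Fin D) ℂ) - B).det =
      ∑ k ∈ Finset.range (D + 1), b k * s ^ k) :
    fracSpec α (A.map (fun a => (a : ℂ))) ⊆ {z : ℂ | z.re < 0} ↔
      {s : ℂ | (-(γ * Real.pi) < s.arg ∧ s.arg ≤ γ * Real.pi) ∧
          (s • (1 : Matrix (Fin D) (Fin D) ℂ) - B).det = 0} ⊆
        {z : ℂ | z ≠ 0 ∧ γ * (Real.pi / 2) < |z.arg| ∧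
          -(γ * Real.pi) < z.arg ∧ z.arg ≤ γ * Real.pi} :=
  fracSpec_subset_left_halfplane_iff_companion_roots_general A α q m hm hαq m₀ hm₀ p hp γ hγ b hb D
    hD B hB
end

section
/- Let n ∈ ℕ, A ∈ Mₙ(ℝ) and α̂ ∈ (0,1]ⁿ, and suppose σ_{α̂}(A) ⊆ ℂ₋. Then δ²_{α̂}(A) ≥ sup{ ε > 0 : σ²_{α̂,ε}(A) ⊆ ℂ₋ }. -/
/-- Matrix operator norm induced by a vector norm `N`. -/
noncomputable def matOpNorm {n : ℕ} (N : (Fin n → ℂ) → ℝ) (M : Matrix (Fin n) (Fin n) ℂ) : ℝ :=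
  sSup {t : ℝ | ∃ v : Fin n → ℂ, N v = 1 ∧ t = N (M.mulVec v)}

/-- `‖M⁻¹‖⁻¹` with the convention that it equals `0` iff `det M = 0`. -/
noncomputable def resInvNorm {n : ℕ} (N : (Fin n → ℂ) → ℝ) (M : Matrix (Fin n) (Fin n) ℂ) : ℝ :=
  if M.det = 0 then 0 else (matOpNorm N M⁻¹)⁻¹

/-- The `α`-order `ε`-pseudospectrum w.r.t. the vector norm `N`. -/
noncomputable def pseudoSpec {n : ℕ} (N : (Fin n → ℂ) → ℝ) (α : Fin n → ℝ) (ε : ℝ)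
    (M : Matrix (Fin n) (Fin n) ℂ) : Set ℂ :=
  {z : ℂ | resInvNorm N (fracMat α M z) ≤ ε}

/-- The Euclidean norm on `Fin n → ℂ`. -/
noncomputable def eucNorm {n : ℕ} (v : Fin n → ℂ) : ℝ :=
  Real.sqrt (∑ i, ‖v i‖ ^ 2)

/-- The matrix norm `‖·‖₂` induced by the Euclidean norm. -/
noncomputable def l2OpNorm {n : ℕ} (M : Matrix (Fin n) (Fin n) ℂ) : ℝ :=
  matOpNorm eucNorm M

/-- The `α`-order `ε`-pseudospectrum `σ²_{α,ε}` w.r.t. the Euclidean norm. -/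
noncomputable def pseudoSpec2 {n : ℕ} (α : Fin n → ℝ) (ε : ℝ)
    (M : Matrix (Fin n) (Fin n) ℂ) : Set ℂ :=
  pseudoSpec eucNorm α ε M

/-- `δ²_{α}(A) := inf{‖E‖₂ : E ∈ Mₙ(ℂ), σ_α(A+E) ∩ ℂ_{≥0} ≠ ∅}`. -/
noncomputable def delta2 {n : ℕ} (α : Fin n → ℝ) (A : Matrix (Fin n) (Fin n) ℝ) : ℝ :=
  sInf {r : ℝ | ∃ E : Matrix (Fin n) (Fin n) ℂ, l2OpNorm E = r ∧
    ∃ z ∈ fracSpec α (A.map (fun a => (a : ℂ)) + E), 0 ≤ z.re}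

/-- `β̂` is an `ε`-rational approximation of `α̂` associated with `A` (Definition 4.1):
(i) each `β_i` is rational with `0 < β_i ≤ α_i ≤ 1`;
(ii) some `R ≥ 1` excludes both Euclidean `ε`-pseudospectra from `{|z| > R}`;
(iii) some `ρ ∈ (0,1)` excludes both spectra from `{|z| < ρ}`;
(iv) for these `R, ρ`: `sup_{ρ ≤ |z| ≤ R} |z^{α_i} − z^{β_i}| < ε` for all `i`. -/
def IsRatApprox {n : ℕ} (A : Matrix (Fin n) (Fin n) ℝ) (α : Fin n → ℝ) (ε : ℝ)
    (β : Fin n → ℝ) : Prop :=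
  (∀ i, ∃ r : ℚ, (r : ℝ) = β i) ∧
  (∀ i, 0 < β i ∧ β i ≤ α i ∧ α i ≤ 1) ∧
  ∃ R : ℝ, 1 ≤ R ∧ ∃ ρ : ℝ, ρ ∈ Set.Ioo (0 : ℝ) 1 ∧
    pseudoSpec2 α ε (A.map (fun a => (a : ℂ))) ∩ {z : ℂ | R < ‖z‖} = ∅ ∧
    pseudoSpec2 β ε (A.map (fun a => (a : ℂ))) ∩ {z : ℂ | R < ‖z‖} = ∅ ∧
    fracSpec α (A.map (fun a => (a : ℂ))) ∩ {z : ℂ | ‖z‖ < ρ} = ∅ ∧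
    fracSpec β (A.map (fun a => (a : ℂ))) ∩ {z : ℂ | ‖z‖ < ρ} = ∅ ∧
    ∀ i, sSup {t : ℝ | ∃ z : ℂ, ρ ≤ ‖z‖ ∧ ‖z‖ ≤ R ∧
      t = ‖z ^ (α i : ℂ) - z ^ (β i : ℂ)‖} < ε

/-!
If `z ∈ σ_α(A + E)`, then `fracMat α A z - E` is singular. When `fracMat α A z` is invertible,
a Neumann series shows that no perturbation of norm below `‖(fracMat α A z)⁻¹‖₂⁻¹` can make it
singular, so `z` lies in the `‖E‖₂`-pseudospectrum of `A`. Hence, if the `ε`-pseudospectrum lies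
in `ℂ₋`, every `E` moving a point of the spectrum into `ℂ_{≥0}` has `‖E‖₂ > ε`.
-/

open Matrix WithLp
open scoped Matrix.Norms.L2Operator

theorem Units.norm_inv_inv_le_of_not_isUnit_add {R : Type*} [NormedRing R]
    [HasSummableGeomSeries R] (x : Rˣ) {t : R} (h : ¬IsUnit ((x : R) + t)) :
    ‖(↑x⁻¹ : R)‖⁻¹ ≤ ‖t‖ :=
  not_lt.1 fun ht => h (x.add t ht).isUnit

section

variable {n : ℕ}

theorem eucNorm_eq_norm_toLp (v : Fin n → ℂ) : eucNorm v = ‖toLp 2 v‖ := by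
  simp [eucNorm, EuclideanSpace.norm_eq]

theorem matOpNorm_eucNorm_eq_l2_opNorm (M : Matrix (Fin n) (Fin n) ℂ) :
    matOpNorm eucNorm M = ‖M‖ := by
  rw [← l2_opNorm_toEuclideanCLM, ← ContinuousLinearMap.sSup_sphere_eq_norm, matOpNorm]
  congr 1
  ext t
  constructor
  · rintro ⟨v, hv, rfl⟩
    exact ⟨toLp 2 v, by simpa [eucNorm_eq_norm_toLp] using hv, by simp [eucNorm_eq_norm_toLp]⟩
  · rintro ⟨x, hx, rfl⟩
    refine ⟨ofLp x, by simpa [eucNorm_eq_norm_toLp] using hx, ?_⟩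
    rw [eucNorm_eq_norm_toLp, ← toEuclideanCLM_toLp, toLp_ofLp]

theorem l2OpNorm_eq_l2_opNorm (E : Matrix (Fin n) (Fin n) ℂ) : l2OpNorm E = ‖E‖ :=
  matOpNorm_eucNorm_eq_l2_opNorm E

theorem resInvNorm_eucNorm_le_of_det_sub_eq_zero {M E : Matrix (Fin n) (Fin n) ℂ}
    (h : (M - E).det = 0) : resInvNorm eucNorm M ≤ ‖E‖ := by
  unfold resInvNorm
  split_ifs with hM
  · exact norm_nonneg E
  · rw [matOpNorm_eucNorm_eq_l2_opNorm, ← norm_neg E]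
    refine (nonsingInvUnit M (isUnit_iff_ne_zero.mpr hM)).norm_inv_inv_le_of_not_isUnit_add ?_
    rwa [nonsingInvUnit, ← sub_eq_add_neg, isUnit_iff_isUnit_det, isUnit_iff_ne_zero, not_not]

theorem pseudoSpec_mono (N : (Fin n → ℂ) → ℝ) (α : Fin n → ℝ) (M : Matrix (Fin n) (Fin n) ℂ) :
    Monotone fun ε => pseudoSpec N α ε M :=
  fun _ _ hε _ hz => le_trans hz hε

theorem pseudoSpec2_eq_univ_of_isEmpty [IsEmpty (Fin n)] (α : Fin n → ℝ) {ε : ℝ} (hε : 0 ≤ ε)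
    (M : Matrix (Fin n) (Fin n) ℂ) : pseudoSpec2 α ε M = Set.univ := by
  refine Set.eq_univ_of_forall fun z => ?_
  change resInvNorm eucNorm (fracMat α M z) ≤ ε
  rw [resInvNorm, matOpNorm_eucNorm_eq_l2_opNorm, Subsingleton.elim (fracMat α M z)⁻¹ 0,
    norm_zero, _root_.inv_zero, ite_self]
  exact hε

theorem fracMat_add (α : Fin n → ℝ) (M E : Matrix (Fin n) (Fin n) ℂ) (z : ℂ) :
    fracMat α (M + E) z = fracMat α M z - E := by
  simp only [fracMat]
  abel

theorem mem_fracSpec_add_fracMat [Nonempty (Fin n)] (α : Fin n → ℝ)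
    (M : Matrix (Fin n) (Fin n) ℂ) (z : ℂ) : z ∈ fracSpec α (M + fracMat α M z) := by
  simp [fracSpec, fracMat_add]

theorem mem_pseudoSpec2_of_mem_fracSpec_add {α : Fin n → ℝ} {M E : Matrix (Fin n) (Fin n) ℂ}
    {z : ℂ} (hz : z ∈ fracSpec α (M + E)) : z ∈ pseudoSpec2 α ‖E‖ M := by
  refine resInvNorm_eucNorm_le_of_det_sub_eq_zero ?_
  rwa [← fracMat_add]

theorem delta2_nonneg (α : Fin n → ℝ) (A : Matrix (Fin n) (Fin n) ℝ) : 0 ≤ delta2 α A := by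
  refine Real.sInf_nonneg ?_
  rintro r ⟨E, rfl, -⟩
  exact (l2OpNorm_eq_l2_opNorm E).symm ▸ norm_nonneg E

end

theorem delta2_ge_sSup_pseudospectrum_eps_general
    {n : ℕ} (A : Matrix (Fin n) (Fin n) ℝ) (α : Fin n → ℝ) :
    sSup {ε : ℝ | 0 < ε ∧
        pseudoSpec2 α ε (A.map (fun a => (a : ℂ))) ⊆ {z : ℂ | z.re < 0}} ≤
      delta2 α A := by
  set M := A.map (fun a => (a : ℂ))
  refine Real.sSup_le (fun ε ⟨hε, hsub⟩ => ?_) (delta2_nonneg α A)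
  rcases isEmpty_or_nonempty (Fin n) with hn | hn
  · have h1 : (1 : ℂ) ∈ pseudoSpec2 α ε M := by
      rw [pseudoSpec2_eq_univ_of_isEmpty α hε.le M]
      trivial
    exact absurd (hsub h1) (by simp)
  · refine le_csInf ⟨_, _, rfl, 0, mem_fracSpec_add_fracMat α M 0, le_rfl⟩ ?_
    rintro r ⟨E, rfl, z, hz, hzre⟩
    rw [l2OpNorm_eq_l2_opNorm]
    by_contra! hlt
    have hzε : z ∈ pseudoSpec2 α ε M :=
      pseudoSpec_mono eucNorm α M hlt.le (mem_pseudoSpec2_of_mem_fracSpec_add hz)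
    exact (hsub hzε).not_ge hzre

/-- Remark 4.3: if `σ_{α̂}(A) ⊆ ℂ₋` then
`δ²_{α̂}(A) ≥ sup{ε > 0 : σ²_{α̂,ε}(A) ⊆ ℂ₋}`. -/
theorem delta2_ge_sSup_pseudospectrum_eps
    {n : ℕ} (A : Matrix (Fin n) (Fin n) ℝ) (α : Fin n → ℝ)
    (hα : ∀ i, α i ∈ Set.Ioc (0 : ℝ) 1)
    (hspec : fracSpec α (A.map (fun a => (a : ℂ))) ⊆ {z : ℂ | z.re < 0}) :
    sSup {ε : ℝ | 0 < ε ∧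
        pseudoSpec2 α ε (A.map (fun a => (a : ℂ))) ⊆ {z : ℂ | z.re < 0}} ≤
      delta2 α A :=
  delta2_ge_sSup_pseudospectrum_eps_general A α
end

section
/- Let ν ∈ (0,1] and let S : (0,∞) → ℝ be continuous with ∫₀^∞ |S(t)| dt < ∞, |S(t)| ≤ C₁ t^{ν−1} for t near 0 and |S(t)| ≤ C₂ t^{−ν−1} for t large (for some constants C₁, C₂ > 0). Let g : [0,∞) → ℝ be continuous and suppose there exists η > 0 such that g(t) = O(t^{−η}) as t → ∞. Then the convolution F(t) := (S * g)(t) = ∫₀^t S(t−s) g(s) ds satisfies F(t) = O(t^{−μ}) as t → ∞, where μ = min{ν, η}. -/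
open MeasureTheory Asymptotics

/-- Theorem 5.1 (iii): let `ν ∈ (0,1]`, let `S : (0,∞) → ℝ` be continuous
with `∫₀^∞ |S| < ∞`, `|S(t)| ≤ C₁ t^{ν−1}` near `0` and `|S(t)| ≤ C₂ t^{−ν−1}` for large `t`,
and let `g : [0,∞) → ℝ` be continuous with `g(t) = O(t^{−η})` as `t → ∞` for some `η > 0`.
Then the convolution `F(t) = ∫₀^t S(t−s) g(s) ds` satisfies `F(t) = O(t^{−μ})` as `t → ∞`,
where `μ = min{ν, η}`. -/
theorem convolution_decay_rate
    (ν : ℝ) (hν : ν ∈ Set.Ioc (0 : ℝ) 1)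
    (S g : ℝ → ℝ)
    (hScont : ContinuousOn S (Set.Ioi (0 : ℝ)))
    (hSint : IntegrableOn S (Set.Ioi (0 : ℝ)))
    (C₁ C₂ : ℝ) (hC₁ : 0 < C₁) (hC₂ : 0 < C₂)
    (t₀ : ℝ) (ht₀ : 0 < t₀)
    (hS0 : ∀ t : ℝ, 0 < t → t ≤ t₀ → |S t| ≤ C₁ * t ^ (ν - 1))
    (T : ℝ) (hSinf : ∀ t : ℝ, T ≤ t → |S t| ≤ C₂ * t ^ (-ν - 1))
    (hg : ContinuousOn g (Set.Ici (0 : ℝ)))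
    (η : ℝ) (hη : 0 < η)
    (hgO : g =O[Filter.atTop] fun t : ℝ => t ^ (-η))
    (F : ℝ → ℝ) (hF : ∀ t, F t = ∫ s in (0 : ℝ)..t, S (t - s) * g s) :
    F =O[Filter.atTop] fun t : ℝ => t ^ (-(min ν η)) := by
  obtain ⟨hν0, hν1⟩ := hν
  set m := min ν η with hm
  have hm0 : 0 < m := lt_min hν0 hη
  have hmν : m ≤ ν := min_le_left _ _
  have hmη : m ≤ η := min_le_right _ _
  -- bound for g at infinity
  rw [Asymptotics.isBigO_iff] at hgO
  obtain ⟨c, hc⟩ := hgO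
  rw [Filter.eventually_atTop] at hc
  obtain ⟨b, hb⟩ := hc
  set b' := max b 1 with hb'def
  have hb'1 : (1:ℝ) ≤ b' := le_max_right _ _
  set cg := max c 0 with hcgdef
  have hcg0 : 0 ≤ cg := le_max_right _ _
  have hgbd : ∀ s : ℝ, b' ≤ s → |g s| ≤ cg * s ^ (-η) := by
    intro s hs
    have hspos : (0:ℝ) < s := lt_of_lt_of_le one_pos (hb'1.trans hs)
    have h1 := hb s (le_trans (le_max_left _ _) hs)
    rw [Real.norm_eq_abs, Real.norm_eq_abs,
      abs_of_nonneg (Real.rpow_nonneg hspos.le _)] at h1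
    exact h1.trans (mul_le_mul_of_nonneg_right (le_max_left _ _)
      (Real.rpow_nonneg hspos.le _))
  -- g is globally bounded on [0, ∞)
  obtain ⟨G₀, hG₀⟩ := (isCompact_Icc (a := (0:ℝ)) (b := b')).exists_bound_of_continuousOn
    (hg.mono Set.Icc_subset_Ici_self)
  set G := max G₀ cg with hGdef
  have hGbd : ∀ s : ℝ, 0 ≤ s → |g s| ≤ G := by
    intro s hs
    rcases le_total s b' with h | h
    · exact le_trans (hG₀ s ⟨hs, h⟩) (le_max_left _ _)
    · have hle1 : s ^ (-η) ≤ 1 :=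
        Real.rpow_le_one_of_one_le_of_nonpos (hb'1.trans h) (by linarith)
      calc |g s| ≤ cg * s ^ (-η) := hgbd s h
        _ ≤ cg * 1 := mul_le_mul_of_nonneg_left hle1 hcg0
        _ ≤ G := by rw [mul_one]; exact le_max_right _ _
  have hG0 : 0 ≤ G := le_trans (abs_nonneg _) (hGbd 0 le_rfl)
  -- total integral of |S|
  set I := ∫ u in Set.Ioi (0:ℝ), ‖S u‖ with hIdef
  have hI0 : 0 ≤ I := integral_nonneg fun _ => norm_nonneg _
  -- the main estimate, for t large
  set K : ℝ := C₂ * G * 2 ^ ν + cg * I * 2 ^ η with hKdef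
  rw [Asymptotics.isBigO_iff]
  refine ⟨K, ?_⟩
  rw [Filter.eventually_atTop]
  refine ⟨max (max (2*T) (2*b')) 2, ?_⟩
  intro t ht
  have ht2 : (2:ℝ) ≤ t := le_trans (le_max_right _ _) ht
  have ht0 : (0:ℝ) < t := by linarith
  have hhalf : (0:ℝ) < t/2 := by linarith
  have hhalf1 : (1:ℝ) ≤ t/2 := by linarith
  have hT2 : T ≤ t/2 := by
    have := le_trans (le_max_left _ _) (le_trans (le_max_left _ _) ht); linarith
  have hb'2 : b' ≤ t/2 := by
    have := le_trans (le_max_right _ _) (le_trans (le_max_left _ _) ht); linarith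
  -- integrability
  have hS_ii : IntervalIntegrable S volume 0 t := by
    rw [intervalIntegrable_iff_integrableOn_Ioc_of_le ht0.le]
    exact hSint.mono_set Set.Ioc_subset_Ioi_self
  have hS_comp : IntervalIntegrable (fun s => S (t - s)) volume 0 t := by
    have h := (hS_ii.comp_sub_left t).symm
    simpa using h
  have hfull : IntervalIntegrable (fun s => S (t - s) * g s) volume 0 t := by
    refine hS_comp.mul_continuousOn (hg.mono ?_)
    rw [Set.uIcc_of_le ht0.le]
    exact Set.Icc_subset_Ici_self
  have hsub1 : Set.uIcc (0:ℝ) (t/2) ⊆ Set.uIcc (0:ℝ) t := by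
    rw [Set.uIcc_of_le hhalf.le, Set.uIcc_of_le ht0.le]
    exact Set.Icc_subset_Icc le_rfl (by linarith)
  have hsub2 : Set.uIcc (t/2) t ⊆ Set.uIcc (0:ℝ) t := by
    rw [Set.uIcc_of_le (by linarith : t/2 ≤ t), Set.uIcc_of_le ht0.le]
    exact Set.Icc_subset_Icc hhalf.le le_rfl
  have h1 : IntervalIntegrable (fun s => S (t - s) * g s) volume 0 (t/2) :=
    hfull.mono_set hsub1
  have h2 : IntervalIntegrable (fun s => S (t - s) * g s) volume (t/2) t :=
    hfull.mono_set hsub2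
  -- split the integral
  have hsplit : F t = (∫ s in (0:ℝ)..(t/2), S (t - s) * g s)
      + ∫ s in (t/2)..t, S (t - s) * g s := by
    rw [hF]
    exact (intervalIntegral.integral_add_adjacent_intervals h1 h2).symm
  -- bound the first piece
  have hpow1 : (t/2) ^ (-ν - 1) * (t/2) = (t/2) ^ (-ν) := by
    rw [show -ν - 1 = -ν + (-1) by ring, Real.rpow_add hhalf, Real.rpow_neg_one]
    field_simp
  have hbound1 : ‖∫ s in (0:ℝ)..(t/2), S (t - s) * g s‖
      ≤ C₂ * G * (t/2) ^ (-ν) := by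
    have hb1 : ∀ s ∈ Set.uIoc (0:ℝ) (t/2),
        ‖S (t - s) * g s‖ ≤ C₂ * (t/2) ^ (-ν - 1) * G := by
      intro s hs
      rw [Set.uIoc_of_le hhalf.le] at hs
      obtain ⟨hs0, hs2⟩ := hs
      have hts : t/2 ≤ t - s := by linarith
      have hSb : |S (t - s)| ≤ C₂ * (t/2) ^ (-ν - 1) := by
        refine (hSinf (t - s) (hT2.trans hts)).trans ?_
        exact mul_le_mul_of_nonneg_left
          (Real.rpow_le_rpow_of_nonpos hhalf hts (by linarith)) hC₂.le
      rw [Real.norm_eq_abs, abs_mul]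
      exact mul_le_mul hSb (hGbd s hs0.le) (abs_nonneg _)
        (by positivity)
    have := intervalIntegral.norm_integral_le_of_norm_le_const hb1
    calc ‖∫ s in (0:ℝ)..(t/2), S (t - s) * g s‖
        ≤ C₂ * (t/2) ^ (-ν - 1) * G * |t/2 - 0| := this
      _ = C₂ * G * ((t/2) ^ (-ν - 1) * (t/2)) := by
          rw [sub_zero, abs_of_pos hhalf]; ring
      _ = C₂ * G * (t/2) ^ (-ν) := by rw [hpow1]
  -- bound the second piece
  have hSn2 : IntervalIntegrable (fun s => ‖S (t - s)‖) volume (t/2) t :=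
    (hS_comp.mono_set hsub2).norm
  have hbound2 : ‖∫ s in (t/2)..t, S (t - s) * g s‖
      ≤ cg * I * (t/2) ^ (-η) := by
    have hmono : (∫ s in (t/2)..t, ‖S (t - s) * g s‖)
        ≤ ∫ s in (t/2)..t, ‖S (t - s)‖ * (cg * (t/2) ^ (-η)) := by
      refine intervalIntegral.integral_mono_on (by linarith) h2.norm
        (hSn2.mul_const _) ?_
      intro s hs
      obtain ⟨hs1, hs2⟩ := hs
      have hgb : |g s| ≤ cg * (t/2) ^ (-η) := by
        refine (hgbd s (hb'2.trans hs1)).trans ?_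
        exact mul_le_mul_of_nonneg_left
          (Real.rpow_le_rpow_of_nonpos hhalf hs1 (by linarith)) hcg0
      rw [norm_mul]
      exact mul_le_mul_of_nonneg_left (by rwa [Real.norm_eq_abs]) (norm_nonneg _)
    have hint_eq : (∫ s in (t/2)..t, ‖S (t - s)‖) = ∫ u in (0:ℝ)..(t/2), ‖S u‖ := by
      have := intervalIntegral.integral_comp_sub_left
        (a := t/2) (b := t) (fun u => ‖S u‖) t
      rw [show t - t/2 = t/2 by ring] at this
      simpa using this
    have hint_le : (∫ u in (0:ℝ)..(t/2), ‖S u‖) ≤ I := by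
      rw [intervalIntegral.integral_of_le hhalf.le]
      refine setIntegral_mono_set hSint.norm ?_ ?_
      · exact Filter.Eventually.of_forall fun _ => norm_nonneg _
      · exact HasSubset.Subset.eventuallyLE Set.Ioc_subset_Ioi_self
    calc ‖∫ s in (t/2)..t, S (t - s) * g s‖
        ≤ ∫ s in (t/2)..t, ‖S (t - s) * g s‖ :=
          intervalIntegral.norm_integral_le_integral_norm (by linarith)
      _ ≤ ∫ s in (t/2)..t, ‖S (t - s)‖ * (cg * (t/2) ^ (-η)) := hmono
      _ = (∫ s in (t/2)..t, ‖S (t - s)‖) * (cg * (t/2) ^ (-η)) := by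
          rw [intervalIntegral.integral_mul_const]
      _ ≤ I * (cg * (t/2) ^ (-η)) := by
          rw [hint_eq] at *
          exact mul_le_mul_of_nonneg_right hint_le (by positivity)
      _ = cg * I * (t/2) ^ (-η) := by ring
  -- convert (t/2)^(-ν) and (t/2)^(-η) into t^(-m)
  have hconv : ∀ e : ℝ, 0 < e → m ≤ e → (t/2) ^ (-e) ≤ 2 ^ e * t ^ (-m) := by
    intro e he hme
    have h1 : (t/2) ^ (-e) = 2 ^ e * t ^ (-e) := by
      rw [Real.div_rpow ht0.le (by norm_num : (0:ℝ) ≤ 2),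
        Real.rpow_neg (by norm_num : (0:ℝ) ≤ 2)]
      field_simp
    rw [h1]
    exact mul_le_mul_of_nonneg_left
      (Real.rpow_le_rpow_of_exponent_le (by linarith) (by linarith))
      (Real.rpow_nonneg (by norm_num) _)
  have hnormt : ‖t ^ (-m)‖ = t ^ (-m) := by
    rw [Real.norm_eq_abs, abs_of_nonneg (Real.rpow_nonneg ht0.le _)]
  rw [hnormt, hsplit]
  have htm : (0:ℝ) ≤ t ^ (-m) := Real.rpow_nonneg ht0.le _
  calc ‖(∫ s in (0:ℝ)..(t/2), S (t - s) * g s) + ∫ s in (t/2)..t, S (t - s) * g s‖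
      ≤ ‖∫ s in (0:ℝ)..(t/2), S (t - s) * g s‖
        + ‖∫ s in (t/2)..t, S (t - s) * g s‖ := norm_add_le _ _
    _ ≤ C₂ * G * (t/2) ^ (-ν) + cg * I * (t/2) ^ (-η) := add_le_add hbound1 hbound2
    _ ≤ C₂ * G * (2 ^ ν * t ^ (-m)) + cg * I * (2 ^ η * t ^ (-m)) := by
        refine add_le_add ?_ ?_
        · exact mul_le_mul_of_nonneg_left (hconv ν hν0 hmν) (by positivity)
        · exact mul_le_mul_of_nonneg_left (hconv η hη hmη) (by positivity)
    _ = K * t ^ (-m) := by rw [hKdef]; ring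
end
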